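/- The Dirac operator D_R := ∑_{n>0} √n ( id ⊗ dρ*(z̄ₙ) ⊗ γ(zₙ) + id ⊗ dρ*(zₙ) ⊗ γ(z̄ₙ) ) acting on L²(ΩT₀,τ)_fin ⊗ S_{ΩT₀,fin} satisfies the Weitzenböck-type formula D_R² = 2( id ⊗ id ⊗ N + id ⊗ (dρ*(d)/i) ⊗ id ), where N is the fermionic number operator and dρ*(d)/i is positive semi-definite. In particular D_R² is positive semi-definite. -/

import Mathlib

open scoped BigOperators ComplexConjugate

/-- Basis of `L²(ΩT₀,τ)_fin ⊗ S_{ΩT₀,fin} = L²(ℝ^∞)_fin ⊗ L²(ℝ^∞)*_fin ⊗ S_{ΩT₀,fin}`: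
a bosonic monomial, a dual bosonic monomial, and a fermionic wedge monomial. -/
abbrev TripleBasis : Type := (ℕ →₀ ℕ) × (ℕ →₀ ℕ) × Finset ℕ

/-- The space `L²(ΩT₀,τ)_fin ⊗ S_{ΩT₀,fin}`. -/
abbrev HSp : Type := TripleBasis →₀ ℂ

/-- `id ⊗ dρ*(zₙ) ⊗ id` (lowering on the dual Fock factor, with
`‖dρ*(zₙ)(z̄^k)‖² = kₙ‖z̄^k‖²` and `[dρ*(zₙ),dρ*(z̄ₙ)] = −id`). -/
noncomputable def dstarZ (n : ℕ) : HSp →ₗ[ℂ] HSp :=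
  Finsupp.lsum ℂ fun b =>
    LinearMap.toSpanSingleton ℂ HSp
      (((b.2.1 n : ℂ)) • Finsupp.single (b.1, b.2.1 - Finsupp.single n 1, b.2.2) 1)

/-- `id ⊗ dρ*(z̄ₙ) ⊗ id` (raising on the dual Fock factor). -/
noncomputable def dstarZbar (n : ℕ) : HSp →ₗ[ℂ] HSp :=
  Finsupp.lsum ℂ fun b =>
    LinearMap.toSpanSingleton ℂ HSp
      ((-1 : ℂ) • Finsupp.single (b.1, b.2.1 + Finsupp.single n 1, b.2.2) 1)

/-- The Koszul sign of inserting/removing `z̄ₙ` in the wedge monomial `s`. -/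
def ksgn (n : ℕ) (s : Finset ℕ) : ℂ := (-1 : ℂ) ^ (s.filter (· < n)).card

/-- `id ⊗ id ⊗ γ(zₙ)`, with `γ(zₙ) = −√2 (z̄ₙ ⌟ −)`. -/
noncomputable def GammaZ (n : ℕ) : HSp →ₗ[ℂ] HSp :=
  Finsupp.lsum ℂ fun b =>
    LinearMap.toSpanSingleton ℂ HSp
      (if n ∈ b.2.2 then
        ((-(Real.sqrt 2 : ℂ)) * ksgn n b.2.2) •
          Finsupp.single (b.1, b.2.1, b.2.2.erase n) 1
      else 0)

/-- `id ⊗ id ⊗ γ(z̄ₙ)`, with `γ(z̄ₙ) = √2 (z̄ₙ ∧ −)`. -/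
noncomputable def GammaZbar (n : ℕ) : HSp →ₗ[ℂ] HSp :=
  Finsupp.lsum ℂ fun b =>
    LinearMap.toSpanSingleton ℂ HSp
      (if n ∈ b.2.2 then 0
      else ((Real.sqrt 2 : ℂ) * ksgn n b.2.2) •
        Finsupp.single (b.1, b.2.1, insert n b.2.2) 1)

/-- The Dirac operator
`D_R = ∑_{n>0} √n (id ⊗ dρ*(z̄ₙ) ⊗ γ(zₙ) + id ⊗ dρ*(zₙ) ⊗ γ(z̄ₙ))`; the sum is
locally finite (on a basis vector only `n ∈ s` or `n ∈ supp q` contribute). -/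
noncomputable def DiracR : HSp →ₗ[ℂ] HSp :=
  Finsupp.lsum ℂ fun b =>
    LinearMap.toSpanSingleton ℂ HSp
      (∑ n ∈ b.2.1.support ∪ b.2.2, (Real.sqrt n : ℂ) •
        (dstarZbar n (GammaZ n (Finsupp.single b 1)) +
          dstarZ n (GammaZbar n (Finsupp.single b 1))))

/-- `id ⊗ id ⊗ N`, the fermionic number operator (eigenvalue `∑_{j∈s} j`). -/
noncomputable def NopH : HSp →ₗ[ℂ] HSp :=
  Finsupp.lsum ℂ fun b =>
    LinearMap.toSpanSingleton ℂ HSp (((∑ j ∈ b.2.2, j : ℕ) : ℂ) • Finsupp.single b 1)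

/-- `id ⊗ (dρ*(d)/i) ⊗ id`, the bosonic energy operator (eigenvalue `∑ⱼ j kⱼ`). -/
noncomputable def EopH : HSp →ₗ[ℂ] HSp :=
  Finsupp.lsum ℂ fun b =>
    LinearMap.toSpanSingleton ℂ HSp
      (((∑ j ∈ b.2.1.support, j * b.2.1 j : ℕ) : ℂ) • Finsupp.single b 1)

/-- The weight of a basis vector (its squared norm): `∏ kⱼ! · ∏ lⱼ! · 1`. -/
def wt (b : TripleBasis) : ℕ :=
  (∏ j ∈ b.1.support, (b.1 j).factorial) * (∏ j ∈ b.2.1.support, (b.2.1 j).factorial)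

/-- The inner product on `L²(ΩT₀,τ)_fin ⊗ S_{ΩT₀,fin}`. -/
noncomputable def innH (φ ψ : HSp) : ℂ :=
  ∑ b ∈ φ.support ∪ ψ.support, (wt b : ℂ) * conj (φ b) * ψ b

/-!
On a basis vector `(p, q, s)` the `n`-th summand of `D_R` only touches the mode `n`: if
`n ∈ s` it removes `z̄ₙ` from the wedge and raises `qₙ`, otherwise it inserts `z̄ₙ` and
lowers `qₙ`. Flips of different modes commute, while the Koszul signs make their coefficients
anticommute, so in `D_R²` all off-diagonal terms cancel in pairs. Flipping mode `n` twice returns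
to `(p, q, s)` with the factor `2n (qₙ + [n ∈ s])`, and summing over `n` gives `2 (N + E)`. Both
`E` and `D_R²` are diagonal in the orthogonal monomial basis with nonnegative eigenvalues.
-/

open Finset

lemma Complex.ofReal_sqrt_mul_self {x : ℝ} (hx : 0 ≤ x) : (Real.sqrt x : ℂ) * Real.sqrt x = x := by
  rw [← Complex.ofReal_mul, Real.mul_self_sqrt hx]

theorem Finset.sum_sum_eq_sum_diag_of_antisymm {ι M : Type*} [AddCommMonoid M] [DecidableEq ι]
    (s : Finset ι) (F : ι → ι → M) (hF : ∀ i j, i ≠ j → F i j + F j i = 0) :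
    ∑ i ∈ s, ∑ j ∈ s, F i j = ∑ i ∈ s, F i i := by
  rw [← sum_product' s s F, ← diag_union_offDiag, sum_union (disjoint_diag_offDiag s), sum_diag]
  suffices h : ∑ x ∈ s.offDiag, F x.1 x.2 = 0 by rw [h, add_zero]
  exact sum_involution (fun x _ => x.swap) (fun x hx => hF _ _ (mem_offDiag.1 hx).2.2)
    (fun x hx _ => by simpa [Prod.ext_iff, eq_comm] using (mem_offDiag.1 hx).2.2)
    (fun x hx => by grind) (fun x _ => x.swap_swap)

lemma ksgn_mul_self (n : ℕ) (s : Finset ℕ) : ksgn n s * ksgn n s = 1 := by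
  rw [ksgn, ← mul_pow]; norm_num

lemma ksgn_insert_self (n : ℕ) (s : Finset ℕ) : ksgn n (insert n s) = ksgn n s := by
  rw [ksgn, ksgn, filter_insert, if_neg (lt_irrefl n)]

lemma ksgn_erase_self (n : ℕ) (s : Finset ℕ) : ksgn n (s.erase n) = ksgn n s := by
  rw [ksgn, ksgn, filter_erase, erase_eq_of_notMem (by simp)]

lemma ksgn_insert_of_notMem {n m : ℕ} {s : Finset ℕ} (hn : n ∉ s) :
    ksgn m (insert n s) = (if n < m then -1 else 1) * ksgn m s := by
  unfold ksgn
  rw [filter_insert]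
  split_ifs with h
  · rw [card_insert_of_notMem (fun h' => hn (mem_filter.1 h').1), pow_succ, mul_comm]
  · rw [one_mul]

lemma ksgn_erase_of_mem {n m : ℕ} {s : Finset ℕ} (hn : n ∈ s) :
    ksgn m (s.erase n) = (if n < m then -1 else 1) * ksgn m s := by
  conv_rhs => rw [← insert_erase hn, ksgn_insert_of_notMem (notMem_erase n s), ← mul_assoc]
  split_ifs <;> norm_num

open Finsupp (single)

def modes (b : TripleBasis) : Finset ℕ := b.2.1.support ∪ b.2.2

/- When `n ∉ s` and `q n = 0` the subtraction truncates, but then `flipCoeff n b = 0`. -/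
noncomputable def flipMode (n : ℕ) (b : TripleBasis) : TripleBasis :=
  if n ∈ b.2.2 then (b.1, b.2.1 + single n 1, b.2.2.erase n)
  else (b.1, b.2.1 - single n 1, insert n b.2.2)

noncomputable def flipCoeff (n : ℕ) (b : TripleBasis) : ℂ :=
  (Real.sqrt n : ℂ) * (Real.sqrt 2 : ℂ) * ksgn n b.2.2 * if n ∈ b.2.2 then 1 else (b.2.1 n : ℂ)

lemma sqrt_smul_diracSummand (n : ℕ) (b : TripleBasis) :
    (Real.sqrt n : ℂ) •
        (dstarZbar n (GammaZ n (single b 1)) + dstarZ n (GammaZbar n (single b 1)))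
      = flipCoeff n b • single (flipMode n b) 1 := by
  obtain ⟨p, q, s⟩ := b
  by_cases h : n ∈ s
  · simp only [flipCoeff, flipMode, GammaZ, GammaZbar, dstarZ, dstarZbar, Finsupp.lsum_single,
      LinearMap.toSpanSingleton_apply, if_pos h, one_smul, map_smul, map_zero, add_zero,
      smul_smul]
    congr 1
    ring
  · simp only [flipCoeff, flipMode, GammaZ, GammaZbar, dstarZ, dstarZbar, Finsupp.lsum_single,
      LinearMap.toSpanSingleton_apply, if_neg h, one_smul, map_smul, map_zero, zero_add,
      smul_smul]
    congr 1
    ring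

lemma flipCoeff_eq_zero {n : ℕ} {b : TripleBasis} (h : n ∉ modes b) : flipCoeff n b = 0 := by
  simp only [modes, mem_union, Finsupp.mem_support_iff, not_or, not_not] at h
  simp [flipCoeff, h.1, h.2]

lemma DiracR_single_eq_sum (b : TripleBasis) {V : Finset ℕ} (hV : modes b ⊆ V) :
    DiracR (single b 1) = ∑ n ∈ V, flipCoeff n b • single (flipMode n b) 1 := by
  rw [DiracR, Finsupp.lsum_single, LinearMap.toSpanSingleton_apply, one_smul]
  simp_rw [sqrt_smul_diracSummand]
  exact sum_subset hV fun n _ hn => by rw [flipCoeff_eq_zero hn, zero_smul]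

lemma modes_flipMode_subset {n : ℕ} {b : TripleBasis} (h : n ∈ modes b) :
    modes (flipMode n b) ⊆ modes b := by
  intro a ha
  simp only [modes, flipMode, mem_union, Finsupp.mem_support_iff] at h ha ⊢
  split_ifs at ha <;>
    simp only [Finsupp.coe_add, Finsupp.coe_tsub, Pi.add_apply, Pi.sub_apply, Finsupp.single_apply,
      mem_erase, mem_insert] at ha <;>
    grind

lemma flipMode_flipMode_self {n : ℕ} {b : TripleBasis} (h : n ∈ modes b) :
    flipMode n (flipMode n b) = b := by
  obtain ⟨p, q, s⟩ := b
  simp only [modes, mem_union, Finsupp.mem_support_iff] at h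
  by_cases hn : n ∈ s
  · simp [flipMode, hn]
  · simp only [flipMode, hn, if_false, mem_insert_self, if_true, erase_insert hn, Prod.mk.injEq,
      true_and, and_true]
    ext a
    simp only [Finsupp.add_apply, Finsupp.tsub_apply, Finsupp.single_apply]
    grind

lemma flipMode_comm {n m : ℕ} (hnm : n ≠ m) (b : TripleBasis) :
    flipMode m (flipMode n b) = flipMode n (flipMode m b) := by
  obtain ⟨p, q, s⟩ := b
  simp only [flipMode]
  by_cases hn : n ∈ s <;> by_cases hm : m ∈ s <;>
    simp only [hn, hm, hnm, hnm.symm, mem_erase, mem_insert, ne_eq, not_false_eq_true, and_true,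
      true_and, and_false, or_true, or_false, if_true, if_false, Prod.mk.injEq] <;>
    refine ⟨Finsupp.ext fun a => ?_, Finset.ext fun a => ?_⟩ <;>
    simp only [Finsupp.coe_add, Finsupp.coe_tsub, Pi.add_apply, Pi.sub_apply, Finsupp.single_apply,
      mem_erase, mem_insert] <;>
    grind

lemma flipCoeff_mul_flipCoeff_flipMode_self (n : ℕ) (b : TripleBasis) :
    flipCoeff n b * flipCoeff n (flipMode n b)
      = ((2 * (n * (b.2.1 n + if n ∈ b.2.2 then 1 else 0)) : ℕ) : ℂ) := by
  obtain ⟨p, q, s⟩ := b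
  have hsq : ((Real.sqrt n : ℂ) * (Real.sqrt 2 : ℂ) * ksgn n s) ^ 2 = 2 * n := by
    rw [mul_pow, mul_pow, sq, sq, sq, Complex.ofReal_sqrt_mul_self n.cast_nonneg,
      Complex.ofReal_sqrt_mul_self zero_le_two, ksgn_mul_self, mul_one, mul_comm,
      Complex.ofReal_ofNat, Complex.ofReal_natCast]
  by_cases hn : n ∈ s
  · simp only [flipCoeff, flipMode, if_pos hn, notMem_erase, if_false, ksgn_erase_self,
      Finsupp.add_apply, Finsupp.single_eq_same]
    push_cast
    linear_combination ((q n : ℂ) + 1) * hsq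
  · simp only [flipCoeff, flipMode, if_neg hn, mem_insert_self, if_true, ksgn_insert_self]
    push_cast
    linear_combination (q n : ℂ) * hsq

lemma flipCoeff_flipMode_of_ne {n m : ℕ} (hmn : m ≠ n) (b : TripleBasis) :
    flipCoeff m (flipMode n b) = (if n < m then -1 else 1) * flipCoeff m b := by
  obtain ⟨p, q, s⟩ := b
  by_cases hn : n ∈ s
  · simp only [flipCoeff, flipMode, if_pos hn, ksgn_erase_of_mem hn, mem_erase, ne_eq, hmn,
      not_false_eq_true, true_and, Finsupp.add_apply, Finsupp.single_eq_of_ne hmn, add_zero]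
    ring
  · simp only [flipCoeff, flipMode, if_neg hn, ksgn_insert_of_notMem hn, mem_insert, hmn,
      false_or, Finsupp.tsub_apply, Finsupp.single_eq_of_ne hmn, tsub_zero]
    ring

lemma flipCoeff_anticomm {n m : ℕ} (hnm : n ≠ m) (b : TripleBasis) :
    flipCoeff n b * flipCoeff m (flipMode n b) + flipCoeff m b * flipCoeff n (flipMode m b)
      = 0 := by
  rw [flipCoeff_flipMode_of_ne hnm.symm, flipCoeff_flipMode_of_ne hnm]
  rcases hnm.lt_or_gt with h | h
  · rw [if_pos h, if_neg h.asymm]; ring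
  · rw [if_neg h.asymm, if_pos h]; ring

lemma sum_modes_mul_eq (b : TripleBasis) :
    ∑ n ∈ modes b, n * (b.2.1 n + if n ∈ b.2.2 then 1 else 0)
      = ∑ j ∈ b.2.2, j + ∑ j ∈ b.2.1.support, j * b.2.1 j := by
  simp only [mul_add, mul_ite, mul_one, mul_zero, sum_add_distrib, sum_ite_mem, modes]
  rw [inter_eq_right.2 subset_union_right, add_comm,
    ← sum_subset (f := fun n => n * b.2.1 n) subset_union_left fun n _ hn => by
      rw [Finsupp.notMem_support_iff.1 hn, mul_zero]]

lemma DiracR_DiracR_single (b : TripleBasis) :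
    DiracR (DiracR (single b 1))
      = ((2 * (∑ j ∈ b.2.2, j + ∑ j ∈ b.2.1.support, j * b.2.1 j) : ℕ) : ℂ) • single b 1 :=
  calc DiracR (DiracR (single b 1))
      = ∑ n ∈ modes b, ∑ m ∈ modes b,
          flipCoeff n b • flipCoeff m (flipMode n b) • single (flipMode m (flipMode n b)) 1 := by
        rw [DiracR_single_eq_sum b subset_rfl, map_sum]
        refine sum_congr rfl fun n hn => ?_
        rw [map_smul, DiracR_single_eq_sum _ (modes_flipMode_subset hn), smul_sum]
    _ = ∑ n ∈ modes b,
          flipCoeff n b • flipCoeff n (flipMode n b) • single (flipMode n (flipMode n b)) 1 :=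
        sum_sum_eq_sum_diag_of_antisymm _ _ fun n m hnm => by
          rw [flipMode_comm hnm, smul_smul, smul_smul, ← add_smul, flipCoeff_anticomm hnm,
            zero_smul]
    _ = _ := by
        rw [← sum_modes_mul_eq, mul_sum, Nat.cast_sum, sum_smul]
        exact sum_congr rfl fun n hn => by
          rw [smul_smul, flipCoeff_mul_flipCoeff_flipMode_self, flipMode_flipMode_self hn]

lemma NopH_single (b : TripleBasis) :
    NopH (single b 1) = ((∑ j ∈ b.2.2, j : ℕ) : ℂ) • single b 1 := by
  rw [NopH, Finsupp.lsum_single, LinearMap.toSpanSingleton_apply, one_smul]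

lemma EopH_single (b : TripleBasis) :
    EopH (single b 1) = ((∑ j ∈ b.2.1.support, j * b.2.1 j : ℕ) : ℂ) • single b 1 := by
  rw [EopH, Finsupp.lsum_single, LinearMap.toSpanSingleton_apply, one_smul]

theorem DiracR_comp_DiracR : DiracR ∘ₗ DiracR = (2 : ℂ) • (NopH + EopH) := by
  refine Finsupp.lhom_ext' fun b => LinearMap.ext_ring ?_
  simp only [LinearMap.comp_apply, Finsupp.lsingle_apply, LinearMap.smul_apply,
    LinearMap.add_apply, DiracR_DiracR_single, NopH_single, EopH_single, ← add_smul, smul_smul]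
  push_cast
  rfl

lemma Finsupp.lsum_smul_single_apply {α R : Type*} [CommSemiring R] (d : α → R) (v : α →₀ R)
    (a : α) :
    Finsupp.lsum R (fun b => LinearMap.toSpanSingleton R (α →₀ R) (d b • single b 1)) v a
      = d a * v a := by
  rw [Finsupp.lsum_apply, Finsupp.sum_apply, Finsupp.sum_eq_single a
    (fun b _ hb => by simp only [LinearMap.toSpanSingleton_apply, Finsupp.smul_apply,
      Finsupp.single_eq_of_ne' hb, smul_zero]) (fun _ => by simp)]
  simp only [LinearMap.toSpanSingleton_apply, Finsupp.smul_apply, Finsupp.single_eq_same,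
    smul_eq_mul, mul_one, mul_comm]

lemma NopH_apply (v : HSp) (b : TripleBasis) : NopH v b = ((∑ j ∈ b.2.2, j : ℕ) : ℂ) * v b :=
  Finsupp.lsum_smul_single_apply _ v b

lemma EopH_apply (v : HSp) (b : TripleBasis) :
    EopH v b = ((∑ j ∈ b.2.1.support, j * b.2.1 j : ℕ) : ℂ) * v b :=
  Finsupp.lsum_smul_single_apply _ v b

open scoped ComplexOrder in
lemma innH_nonneg_of_diagonal (d : TripleBasis → ℕ) {v w : HSp} (hw : ∀ b, w b = d b * v b) :
    0 ≤ innH v w := by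
  refine sum_nonneg fun b _ => ?_
  rw [hw, starRingEnd_apply, show (wt b : ℂ) * star (v b) * (d b * v b)
    = (wt b * d b) * (star (v b) * v b) by ring]
  exact mul_nonneg (mul_nonneg (Nat.cast_nonneg _) (Nat.cast_nonneg _)) (star_mul_self_nonneg _)

/-- the Weitzenböck-type formula
`D_R² = 2(id ⊗ id ⊗ N + id ⊗ (dρ*(d)/i) ⊗ id)`, where `dρ*(d)/i` is positive
semi-definite; in particular `D_R²` is positive semi-definite. -/
theorem stmt14 :
    (∀ v : HSp, DiracR (DiracR v) = (2 : ℂ) • (NopH v + EopH v)) ∧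
    (∀ v : HSp, 0 ≤ (innH v (EopH v)).re ∧ (innH v (EopH v)).im = 0) ∧
    (∀ v : HSp, 0 ≤ (innH v (DiracR (DiracR v))).re ∧
      (innH v (DiracR (DiracR v))).im = 0) := by
  have DiracR_sq (v : HSp) : DiracR (DiracR v) = (2 : ℂ) • (NopH v + EopH v) :=
    LinearMap.congr_fun DiracR_comp_DiracR v
  refine ⟨DiracR_sq, fun v => RCLike.nonneg_iff (K := ℂ) |>.1 ?_,
    fun v => RCLike.nonneg_iff (K := ℂ) |>.1 ?_⟩
  · exact innH_nonneg_of_diagonal _ (EopH_apply v)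
  · refine innH_nonneg_of_diagonal
      (fun b => 2 * (∑ j ∈ b.2.2, j + ∑ j ∈ b.2.1.support, j * b.2.1 j)) fun b => ?_
    rw [DiracR_sq, Finsupp.smul_apply, Finsupp.add_apply, NopH_apply, EopH_apply, smul_eq_mul]
    push_cast
    ring
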